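/- arXiv:2402.06833 — 2 statements merged into one kernel-verified Lean document; each statement's English description precedes it below -/
import Mathlib

section
/- The map T(x) = 5x + 2 is the unique affine transformation T(x) = u·x + w on Z_12 (with u a unit mod 12) satisfying: T∘T = id, T(K) = D, and {u·s : s ∈ {3,4,8,9}} = {3,4,8,9}, where K = {0,3,4,7,8,9} and D = Z_12 \ K. -/
set_option maxHeartbeats 2000000 in
set_option synthInstance.maxHeartbeats 400000 in
set_option synthInstance.maxSize 2000 in
theorem stmt_15 :
    ((∀ x : ZMod 12, (5 * (5 * x + 2) + 2 : ZMod 12) = x) ∧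
      ((fun x : ZMod 12 => 5 * x + 2) '' ({0, 3, 4, 7, 8, 9} : Set (ZMod 12)) =
          (({0, 3, 4, 7, 8, 9} : Set (ZMod 12))ᶜ)) ∧
      ((fun s : ZMod 12 => 5 * s) '' ({3, 4, 8, 9} : Set (ZMod 12)) =
          ({3, 4, 8, 9} : Set (ZMod 12)))) ∧
    ∀ u w : ZMod 12, IsUnit u →
      (∀ x : ZMod 12, u * (u * x + w) + w = x) →
      ((fun x : ZMod 12 => u * x + w) '' ({0, 3, 4, 7, 8, 9} : Set (ZMod 12)) =
          (({0, 3, 4, 7, 8, 9} : Set (ZMod 12))ᶜ)) →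
      ((fun s : ZMod 12 => u * s) '' ({3, 4, 8, 9} : Set (ZMod 12)) =
          ({3, 4, 8, 9} : Set (ZMod 12))) →
      u = 5 ∧ w = 2 := by
  simp only [Set.ext_iff, Set.mem_image, Set.mem_insert_iff, Set.mem_singleton_iff, Set.mem_compl_iff, isUnit_iff_exists_inv]
  decide
end

section
/- Let K' = {0,3,4,8,9} ⊂ Z_12. The partitions of Z_12 into six-element sets (K, D) with K' ⊂ K, D = Z_12 \ K, for which there exists an affine map T(x) = u·x + w (u ∈ U(12)) with T∘T = id, T(K) = D, and u·{3,4,8,9} = {3,4,8,9}, are exactly four: K ∈ {K'∪{7}, K'∪{1}} with T(x) = 5x+2, and K ∈ {K'∪{5}, K'∪{11}} with T(x) = 5x+10. -/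
def Kb (b1 b2 b5 b6 b7 b10 b11 : Bool) : Set (ZMod 12) :=
  {x | x = 0 ∨ x = 3 ∨ x = 4 ∨ x = 8 ∨ x = 9 ∨ (b1 ∧ x = 1) ∨ (b2 ∧ x = 2) ∨
    (b5 ∧ x = 5) ∨ (b6 ∧ x = 6) ∨ (b7 ∧ x = 7) ∨ (b10 ∧ x = 10) ∨ (b11 ∧ x = 11)}

lemma unit12 (u : ZMod 12) : IsUnit u ↔ (u = 1 ∨ u = 5 ∨ u = 7 ∨ u = 11) := by
  constructor
  · rintro ⟨⟨a, b, hab, hba⟩, rfl⟩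
    revert hab; revert b; revert a; decide
  · rintro (rfl | rfl | rfl | rfl)
    · exact isUnit_one
    · exact ⟨⟨5, 5, by decide, by decide⟩, rfl⟩
    · exact ⟨⟨7, 7, by decide, by decide⟩, rfl⟩
    · exact ⟨⟨11, 11, by decide, by decide⟩, rfl⟩

set_option maxHeartbeats 16000000 in
set_option synthInstance.maxHeartbeats 2000000 in
set_option synthInstance.maxSize 5000 in
set_option maxRecDepth 20000 in
lemma Lfwd : ∀ b1 b2 b5 b6 b7 b10 b11 : Bool,
    ((({0, 3, 4, 8, 9} : Set (ZMod 12)) ⊆ Kb b1 b2 b5 b6 b7 b10 b11 ∧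
      ∃ u w : ZMod 12, IsUnit u ∧
        (∀ x : ZMod 12, u * (u * x + w) + w = x) ∧
        ((fun x : ZMod 12 => u * x + w) '' Kb b1 b2 b5 b6 b7 b10 b11 =
          (Kb b1 b2 b5 b6 b7 b10 b11)ᶜ) ∧
        ((fun s : ZMod 12 => u * s) '' ({3, 4, 8, 9} : Set (ZMod 12)) =
          ({3, 4, 8, 9} : Set (ZMod 12)))) →
      (Kb b1 b2 b5 b6 b7 b10 b11 = ({0, 3, 4, 8, 9} : Set (ZMod 12)) ∪ {7} ∨
       Kb b1 b2 b5 b6 b7 b10 b11 = ({0, 3, 4, 8, 9} : Set (ZMod 12)) ∪ {1} ∨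
       Kb b1 b2 b5 b6 b7 b10 b11 = ({0, 3, 4, 8, 9} : Set (ZMod 12)) ∪ {5} ∨
       Kb b1 b2 b5 b6 b7 b10 b11 = ({0, 3, 4, 8, 9} : Set (ZMod 12)) ∪ {11})) := by
  simp only [unit12, Kb, Set.ext_iff, Set.subset_def, Set.mem_image, Set.mem_insert_iff,
    Set.mem_singleton_iff, Set.mem_compl_iff, Set.mem_setOf_eq, Set.mem_union]
  intro b1 b2 b5 b6 b7 b10 b11
  cases b1 <;> cases b2 <;> cases b5 <;> cases b6 <;> cases b7 <;> cases b10 <;> cases b11 <;>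
    decide

set_option synthInstance.maxHeartbeats 2000000 in
set_option synthInstance.maxSize 5000 in
set_option maxRecDepth 20000 in
lemma hK_aux (K : Set (ZMod 12)) (b : ZMod 12 → Bool) (hb : ∀ x, x ∈ K ↔ b x = true)
    (e0 : b 0 = true) (e3 : b 3 = true) (e4 : b 4 = true) (e8 : b 8 = true)
    (e9 : b 9 = true) : K = Kb (b 1) (b 2) (b 5) (b 6) (b 7) (b 10) (b 11) := by
  have h12 : ∀ x : ZMod 12, x = 0 ∨ x = 1 ∨ x = 2 ∨ x = 3 ∨ x = 4 ∨ x = 5 ∨ x = 6 ∨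
      x = 7 ∨ x = 8 ∨ x = 9 ∨ x = 10 ∨ x = 11 := by decide
  ext x
  rw [hb x]
  rcases h12 x with rfl|rfl|rfl|rfl|rfl|rfl|rfl|rfl|rfl|rfl|rfl|rfl <;>
    simp only [Kb, Set.mem_setOf_eq, e0, e3, e4, e8, e9] <;>
    (generalize b 1 = c1; generalize b 2 = c2; generalize b 5 = c5;
     generalize b 6 = c6; generalize b 7 = c7; generalize b 10 = c10;
     generalize b 11 = c11;
     revert c1 c2 c5 c6 c7 c10 c11; decide)

theorem stmt_16 :
    (∀ K : Set (ZMod 12),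
      ((({0, 3, 4, 8, 9} : Set (ZMod 12)) ⊆ K ∧
        ∃ u w : ZMod 12, IsUnit u ∧
          (∀ x : ZMod 12, u * (u * x + w) + w = x) ∧
          ((fun x : ZMod 12 => u * x + w) '' K = Kᶜ) ∧
          ((fun s : ZMod 12 => u * s) '' ({3, 4, 8, 9} : Set (ZMod 12)) =
            ({3, 4, 8, 9} : Set (ZMod 12)))) ↔
        (K = ({0, 3, 4, 8, 9} : Set (ZMod 12)) ∪ {7} ∨
         K = ({0, 3, 4, 8, 9} : Set (ZMod 12)) ∪ {1} ∨
         K = ({0, 3, 4, 8, 9} : Set (ZMod 12)) ∪ {5} ∨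
         K = ({0, 3, 4, 8, 9} : Set (ZMod 12)) ∪ {11}))) ∧
    ((fun x : ZMod 12 => 5 * x + 2) '' (({0, 3, 4, 8, 9} : Set (ZMod 12)) ∪ {7}) =
        ((({0, 3, 4, 8, 9} : Set (ZMod 12)) ∪ {7})ᶜ)) ∧
    ((fun x : ZMod 12 => 5 * x + 2) '' (({0, 3, 4, 8, 9} : Set (ZMod 12)) ∪ {1}) =
        ((({0, 3, 4, 8, 9} : Set (ZMod 12)) ∪ {1})ᶜ)) ∧
    ((fun x : ZMod 12 => 5 * x + 10) '' (({0, 3, 4, 8, 9} : Set (ZMod 12)) ∪ {5}) =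
        ((({0, 3, 4, 8, 9} : Set (ZMod 12)) ∪ {5})ᶜ)) ∧
    ((fun x : ZMod 12 => 5 * x + 10) '' (({0, 3, 4, 8, 9} : Set (ZMod 12)) ∪ {11}) =
        ((({0, 3, 4, 8, 9} : Set (ZMod 12)) ∪ {11})ᶜ)) := by
  refine ⟨?_, ?_, ?_, ?_, ?_⟩
  · intro K
    constructor
    · intro h
      have hsub := h.1
      have h0 : (0 : ZMod 12) ∈ K := hsub (by simp)
      have h3 : (3 : ZMod 12) ∈ K := hsub (by simp)
      have h4 : (4 : ZMod 12) ∈ K := hsub (by simp)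
      have h8 : (8 : ZMod 12) ∈ K := hsub (by simp)
      have h9 : (9 : ZMod 12) ∈ K := hsub (by simp)
      set b : ZMod 12 → Bool := fun x => @decide (x ∈ K) (Classical.dec _) with hbdef
      have hb : ∀ x, x ∈ K ↔ b x = true := by
        intro x; simp [hbdef]
      have e0 : b 0 = true := (hb 0).mp h0
      have e3 : b 3 = true := (hb 3).mp h3
      have e4 : b 4 = true := (hb 4).mp h4
      have e8 : b 8 = true := (hb 8).mp h8
      have e9 : b 9 = true := (hb 9).mp h9
      have hK : K = Kb (b 1) (b 2) (b 5) (b 6) (b 7) (b 10) (b 11) :=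
        hK_aux K b hb e0 e3 e4 e8 e9
      rw [hK] at h ⊢
      exact Lfwd _ _ _ _ _ _ _ h
    · rintro (rfl | rfl | rfl | rfl)
      · refine ⟨Set.subset_union_left, 5, 2, (unit12 5).mpr (by tauto), by decide, ?_, ?_⟩
        · simp only [Set.ext_iff, Set.mem_image, Set.mem_compl_iff, Set.mem_union,
            Set.mem_insert_iff, Set.mem_singleton_iff]
          decide
        · simp only [Set.ext_iff, Set.mem_image, Set.mem_insert_iff, Set.mem_singleton_iff]
          decide
      · refine ⟨Set.subset_union_left, 5, 2, (unit12 5).mpr (by tauto), by decide, ?_, ?_⟩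
        · simp only [Set.ext_iff, Set.mem_image, Set.mem_compl_iff, Set.mem_union,
            Set.mem_insert_iff, Set.mem_singleton_iff]
          decide
        · simp only [Set.ext_iff, Set.mem_image, Set.mem_insert_iff, Set.mem_singleton_iff]
          decide
      · refine ⟨Set.subset_union_left, 5, 10, (unit12 5).mpr (by tauto), by decide, ?_, ?_⟩
        · simp only [Set.ext_iff, Set.mem_image, Set.mem_compl_iff, Set.mem_union,
            Set.mem_insert_iff, Set.mem_singleton_iff]
          decide
        · simp only [Set.ext_iff, Set.mem_image, Set.mem_insert_iff, Set.mem_singleton_iff]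
          decide
      · refine ⟨Set.subset_union_left, 5, 10, (unit12 5).mpr (by tauto), by decide, ?_, ?_⟩
        · simp only [Set.ext_iff, Set.mem_image, Set.mem_compl_iff, Set.mem_union,
            Set.mem_insert_iff, Set.mem_singleton_iff]
          decide
        · simp only [Set.ext_iff, Set.mem_image, Set.mem_insert_iff, Set.mem_singleton_iff]
          decide
  all_goals
    simp only [Set.ext_iff, Set.mem_image, Set.mem_compl_iff, Set.mem_union,
      Set.mem_insert_iff, Set.mem_singleton_iff]
    decide
end
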